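/- Let $Q_n: \mathbb{R}^k \to \mathbb{R}$ be twice continuously differentiable on a convex neighborhood $\mathcal{N}$ of $\theta^*$, and let $\hat\theta_n \in \mathcal{N}$ satisfy $\nabla Q_n(\hat\theta_n) = 0$ and $\hat\theta_n \to \theta^*$. Suppose (i) $r_n \nabla Q_n(\theta^*) \to z \in \mathbb{R}^k$ for a sequence $r_n \to \infty$, (ii) $\sup_{\theta \in \mathcal{N}} \|\nabla^2 Q_n(\theta) - H(\theta)\| \to 0$ for a function $H$ continuous at $\theta^*$, and (iii) $H(\theta^*)$ is invertible. Then $r_n(\hat\theta_n - \theta^*) \to -H(\theta^*)^{-1} z$. -/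

import Mathlib

open Filter Topology

set_option maxHeartbeats 1000000
set_option synthInstance.maxHeartbeats 1000000

theorem stmt_12 {k : ℕ}
    (Qn : ℕ → EuclideanSpace ℝ (Fin k) → ℝ)
    (N : Set (EuclideanSpace ℝ (Fin k))) (θstar : EuclideanSpace ℝ (Fin k))
    (hN : N ∈ 𝓝 θstar) (hconv : Convex ℝ N)
    (hsmooth : ∀ n, ContDiffOn ℝ 2 (Qn n) N)
    (θhat : ℕ → EuclideanSpace ℝ (Fin k)) (hmem : ∀ n, θhat n ∈ N)
    (hfoc : ∀ n, gradient (Qn n) (θhat n) = 0)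
    (hcons : Tendsto θhat atTop (𝓝 θstar))
    (r : ℕ → ℝ) (hr : Tendsto r atTop atTop)
    (z : EuclideanSpace ℝ (Fin k))
    (hscore : Tendsto (fun n => r n • gradient (Qn n) θstar) atTop (𝓝 z))
    (H : EuclideanSpace ℝ (Fin k) →
        (EuclideanSpace ℝ (Fin k) →L[ℝ] EuclideanSpace ℝ (Fin k)))
    (hHunif : TendstoUniformlyOn
      (fun n θ => fderiv ℝ (gradient (Qn n)) θ) H atTop N)
    (hHcont : ContinuousAt H θstar)
    (e : EuclideanSpace ℝ (Fin k) ≃L[ℝ] EuclideanSpace ℝ (Fin k))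
    (he : (e : EuclideanSpace ℝ (Fin k) →L[ℝ] EuclideanSpace ℝ (Fin k)) = H θstar) :
    Tendsto (fun n => r n • (θhat n - θstar)) atTop (𝓝 (-(e.symm z))) := by
  have hU : interior N ∈ 𝓝 θstar := interior_mem_nhds.mpr hN
  have hUconv : Convex ℝ (interior N) := hconv.interior
  -- differentiability of the gradient on the interior
  have hdiff : ∀ n, ∀ θ ∈ interior N, DifferentiableAt ℝ (gradient (Qn n)) θ := by
    intro n θ hθ
    have h2 : ContDiffAt ℝ 2 (Qn n) θ :=
      (hsmooth n).contDiffAt (mem_interior_iff_mem_nhds.mp hθ)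
    have h1 : ContDiffAt ℝ 1 (fderiv ℝ (Qn n)) θ := by
      have h11 : ((1 : WithTop ℕ∞) + 1 : WithTop ℕ∞) ≤ 2 := by norm_num
      exact h2.fderiv_right h11
    have heq : gradient (Qn n) = fun x =>
        (InnerProductSpace.toDual ℝ (EuclideanSpace ℝ (Fin k))).symm
          (fderiv ℝ (Qn n) x) := rfl
    rw [heq]
    exact ((InnerProductSpace.toDual ℝ
      (EuclideanSpace ℝ (Fin k))).symm.differentiable.differentiableAt).comp θ
      (h1.differentiableAt one_ne_zero)
  -- key mean value estimate
  have key : ∀ ε > (0 : ℝ), ∀ᶠ n in atTop,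
      ‖H θstar (θhat n - θstar) + gradient (Qn n) θstar‖ ≤ ε * ‖θhat n - θstar‖ := by
    intro ε hε
    obtain ⟨B, hB, hBball⟩ : ∃ B ∈ 𝓝 θstar, ∀ θ ∈ B, ‖H θ - H θstar‖ < ε / 2 := by
      have h := hHcont (Metric.ball_mem_nhds (H θstar) (by positivity : (0:ℝ) < ε/2))
      exact ⟨_, h, fun θ hθ => by
        simpa [dist_eq_norm] using Metric.mem_ball.mp hθ⟩
    obtain ⟨δ, hδpos, hδ⟩ := Metric.mem_nhds_iff.mp (inter_mem hU hB)
    set s : Set (EuclideanSpace ℝ (Fin k)) :=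
      interior N ∩ Metric.ball θstar δ with hsdef
    have hsconv : Convex ℝ s := hUconv.inter (convex_ball _ _)
    have hsmemθ : θstar ∈ s := ⟨mem_of_mem_nhds hU, Metric.mem_ball_self hδpos⟩
    have hsnhds : s ∈ 𝓝 θstar := inter_mem hU (Metric.ball_mem_nhds _ hδpos)
    have h1 : ∀ᶠ n in atTop, θhat n ∈ s := hcons.eventually_mem hsnhds
    have h2 : ∀ᶠ n in atTop, ∀ θ ∈ N,
        dist (H θ) (fderiv ℝ (gradient (Qn n)) θ) < ε / 2 :=
      (Metric.tendstoUniformlyOn_iff.mp hHunif) (ε / 2) (by positivity)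
    filter_upwards [h1, h2] with n hn1 hn2
    have bound : ∀ θ ∈ s, ‖fderiv ℝ (gradient (Qn n)) θ - H θstar‖ ≤ ε := by
      intro θ hθ
      have hθN : θ ∈ N := interior_subset hθ.1
      have hθB : θ ∈ B := (hδ hθ.2).2
      have e1 : ‖fderiv ℝ (gradient (Qn n)) θ - H θ‖ < ε / 2 := by
        have h3 := hn2 θ hθN
        rwa [dist_comm, dist_eq_norm] at h3
      have e2 : ‖H θ - H θstar‖ < ε / 2 := hBball θ hθB
      calc ‖fderiv ℝ (gradient (Qn n)) θ - H θstar‖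
          ≤ ‖fderiv ℝ (gradient (Qn n)) θ - H θ‖ + ‖H θ - H θstar‖ := by
            simpa using norm_sub_le_norm_sub_add_norm_sub
              (fderiv ℝ (gradient (Qn n)) θ) (H θ) (H θstar)
        _ ≤ ε := by linarith
    have hf : ∀ θ ∈ s, HasFDerivWithinAt (gradient (Qn n))
        (fderiv ℝ (gradient (Qn n)) θ) s θ := fun θ hθ =>
      (hdiff n θ hθ.1).hasFDerivAt.hasFDerivWithinAt
    have mv := hsconv.norm_image_sub_le_of_norm_hasFDerivWithin_le' hf bound hsmemθ hn1
    rw [hfoc n] at mv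
    calc ‖H θstar (θhat n - θstar) + gradient (Qn n) θstar‖
        = ‖0 - gradient (Qn n) θstar - H θstar (θhat n - θstar)‖ := by
          rw [← norm_neg]; congr 1; abel
      _ ≤ ε * ‖θhat n - θstar‖ := mv
  -- final limit argument
  set u : ℕ → EuclideanSpace ℝ (Fin k) := fun n => r n • (θhat n - θstar) with hu
  set v : ℕ → EuclideanSpace ℝ (Fin k) :=
    fun n => r n • gradient (Qn n) θstar with hv
  set M : ℝ := ‖(e.symm : EuclideanSpace ℝ (Fin k) →L[ℝ] EuclideanSpace ℝ (Fin k))‖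
    with hM
  have hM0 : 0 ≤ M := norm_nonneg _
  have key2 : ∀ ε > (0 : ℝ), ∀ᶠ n in atTop,
      ‖H θstar (u n) + v n‖ ≤ ε * ‖u n‖ := by
    intro ε hε
    filter_upwards [key ε hε] with n hn
    have h1 : H θstar (u n) + v n
        = r n • (H θstar (θhat n - θstar) + gradient (Qn n) θstar) := by
      simp [hu, hv, smul_add, (H θstar).map_smul]
    rw [h1, norm_smul, hu]
    calc ‖r n‖ * ‖H θstar (θhat n - θstar) + gradient (Qn n) θstar‖
        ≤ ‖r n‖ * (ε * ‖θhat n - θstar‖) :=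
          mul_le_mul_of_nonneg_left hn (norm_nonneg _)
      _ = ε * ‖r n • (θhat n - θstar)‖ := by rw [norm_smul]; ring
  have key3 : ∀ n, ‖u n + e.symm (v n)‖ ≤ M * ‖H θstar (u n) + v n‖ := by
    intro n
    have h1 : u n + e.symm (v n)
        = (e.symm : EuclideanSpace ℝ (Fin k) →L[ℝ] EuclideanSpace ℝ (Fin k))
          (H θstar (u n) + v n) := by
      have h2 : (H θstar) (u n) = e (u n) := by rw [← he]; rfl
      rw [h2]; simp
    rw [h1]
    exact (e.symm : EuclideanSpace ℝ (Fin k) →L[ℝ]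
      EuclideanSpace ℝ (Fin k)).le_opNorm _
  -- boundedness of u
  have hvb : ∀ᶠ n in atTop, ‖v n‖ ≤ ‖z‖ + 1 := by
    have h := hscore.norm.eventually_le_const
      (by linarith [norm_nonneg z] : ‖z‖ < ‖z‖ + 1)
    simpa [hv] using h
  set K : ℝ := 2 * M * (‖z‖ + 1) with hK
  have hK0 : 0 ≤ K := by positivity
  have hub : ∀ᶠ n in atTop, ‖u n‖ ≤ K := by
    have hε0 : (0:ℝ) < 1 / (2 * (M + 1)) := by positivity
    filter_upwards [key2 _ hε0, hvb] with n h2 h3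
    have h4 := key3 n
    have h5 : ‖u n‖ ≤ ‖u n + e.symm (v n)‖ + ‖e.symm (v n)‖ := by
      have h6 := norm_sub_le (u n + e.symm (v n)) (e.symm (v n))
      simpa using h6
    have h6 : ‖e.symm (v n)‖ ≤ M * ‖v n‖ :=
      (e.symm : EuclideanSpace ℝ (Fin k) →L[ℝ] EuclideanSpace ℝ (Fin k)).le_opNorm (v n)
    have h7 : ‖u n + e.symm (v n)‖ ≤ M * (1 / (2 * (M + 1)) * ‖u n‖) :=
      h4.trans (mul_le_mul_of_nonneg_left h2 hM0)
    have h8 : M * (1 / (2 * (M + 1)) * ‖u n‖) ≤ (1/2) * ‖u n‖ := by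
      rw [div_mul_eq_mul_div, mul_div_assoc', div_le_iff₀ (by positivity)]
      nlinarith [norm_nonneg (u n)]
    nlinarith [norm_nonneg (u n), mul_le_mul_of_nonneg_left h3 hM0]
  -- u n + e.symm (v n) → 0
  have hzero : Tendsto (fun n => u n + e.symm (v n)) atTop (𝓝 0) := by
    rw [NormedAddCommGroup.tendsto_nhds_zero]
    intro ε hε
    have hε'0 : (0:ℝ) < ε / (2 * (M + 1) * (K + 1)) := by positivity
    filter_upwards [key2 _ hε'0, hub] with n h2 h3
    have h4 := (key3 n).trans (mul_le_mul_of_nonneg_left h2 hM0)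
    have h5 : M * (ε / (2 * (M + 1) * (K + 1)) * ‖u n‖) < ε := by
      rw [div_mul_eq_mul_div, mul_div_assoc', div_lt_iff₀ (by positivity)]
      nlinarith [norm_nonneg (u n), mul_le_mul_of_nonneg_left h3 (mul_nonneg hM0 hε.le),
        mul_nonneg hε.le hM0, mul_nonneg hε.le hK0,
        mul_nonneg (mul_nonneg hε.le hM0) hK0]
    linarith
  have hev : Tendsto (fun n => e.symm (v n)) atTop (𝓝 (e.symm z)) :=
    (e.symm.continuous.tendsto z).comp hscore
  have hfin := hzero.sub hev
  simp only [add_sub_cancel_right] at hfin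
  simpa using hfin
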